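/- arXiv:1910.10295 — 2 statements merged into one kernel-verified Lean document; each statement's English description precedes it below -/
import Mathlib

section
/- Let E be a real Banach space. There exists a constant C > 0 such that for every T > 0, every natural number N ≥ 2, with Δt := T/N and tₙ := n·Δt, and every function v : ℝ → E that is twice continuously differentiable on [0, T] with second derivative v″, one has Δt⁵·Σ_{n=2}^{N} ‖(v(tₙ) − 2·v(t_{n−1}) + v(t_{n−2}))/Δt²‖² ≤ C·Δt⁴·∫_{0}^{T} ‖v″(s)‖² ds. -/
/-!
The second difference `v (t + 2h) - 2 v (t + h) + v t` is the increment over `[t, t + h]` of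
`s ↦ v (s + h) - v s`, whose derivative `v' (s + h) - v' s` has norm at most `∫_t^{t+2h} ‖v''‖`
(fundamental theorem of calculus). Hence the second difference has norm at most
`h ∫_t^{t+2h} ‖v''‖`, and Cauchy–Schwarz gives `‖·‖² ≤ 2h³ ∫_t^{t+2h} ‖v''‖²`. The windows
`[t_{n-2}, t_n]` cover `[0, T]` at most twice, which yields the constant `C = 4`.
-/

open intervalIntegral MeasureTheory Set Finset

theorem sq_intervalIntegral_le_mul_intervalIntegral_sq {f : ℝ → ℝ} {a b : ℝ} (hab : a ≤ b)
    (hf : IntervalIntegrable f volume a b)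
    (hf2 : IntervalIntegrable (fun x ↦ f x ^ 2) volume a b) :
    (∫ x in a..b, f x) ^ 2 ≤ (b - a) * ∫ x in a..b, f x ^ 2 := by
  rcases hab.eq_or_lt with rfl | hab'
  · simp
  set I := ∫ x in a..b, f x
  have hL : 0 < b - a := sub_pos.2 hab'
  -- integrate the AM-GM inequality `2 I f ≤ (b - a) f² + I² / (b - a)`
  have key : ∫ x in a..b, 2 * I * f x ≤ ∫ x in a..b, ((b - a) * f x ^ 2 + I ^ 2 / (b - a)) := by
    refine integral_mono_on hab (hf.const_mul _) ((hf2.const_mul _).add intervalIntegrable_const)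
      fun x _ ↦ ?_
    rw [← sub_nonneg]
    have : (b - a) * f x ^ 2 + I ^ 2 / (b - a) - 2 * I * f x =
        ((b - a) * f x - I) ^ 2 / (b - a) := by
      field_simp; ring
    rw [this]; positivity
  rw [intervalIntegral.integral_const_mul, integral_add (hf2.const_mul _) intervalIntegrable_const,
    intervalIntegral.integral_const_mul, intervalIntegral.integral_const, smul_eq_mul,
    mul_div_cancel₀ _ hL.ne'] at key
  nlinarith

section

variable {E : Type*} [NormedAddCommGroup E] [NormedSpace ℝ E] [CompleteSpace E]
  {v v' v'' : ℝ → E}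

theorem norm_sub_le_intervalIntegral_norm_deriv {f f' : ℝ → E} {a b : ℝ} (hab : a ≤ b)
    (hf : ∀ x ∈ Icc a b, HasDerivWithinAt f (f' x) (Icc a b) x)
    (hf' : ContinuousOn f' (Icc a b)) :
    ‖f b - f a‖ ≤ ∫ x in a..b, ‖f' x‖ := by
  rw [← integral_eq_sub_of_hasDeriv_right_of_le hab
    (fun x hx ↦ (hf x hx).continuousWithinAt)
    (fun x hx ↦
      ((hf x (Ioo_subset_Icc_self hx)).hasDerivAt (Icc_mem_nhds hx.1 hx.2)).hasDerivWithinAt)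
    (hf'.intervalIntegrable_of_Icc hab)]
  exact norm_integral_le_integral_norm hab

theorem norm_sub_two_smul_add_le {a h : ℝ} (hh : 0 ≤ h)
    (hv : ∀ s ∈ Icc a (a + 2 * h), HasDerivWithinAt v (v' s) (Icc a (a + 2 * h)) s)
    (hv' : ∀ s ∈ Icc a (a + 2 * h), HasDerivWithinAt v' (v'' s) (Icc a (a + 2 * h)) s)
    (hv'' : ContinuousOn v'' (Icc a (a + 2 * h))) :
    ‖v (a + 2 * h) - (2 : ℝ) • v (a + h) + v a‖ ≤ h * ∫ s in a..a + 2 * h, ‖v'' s‖ := by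
  have hg : ∀ s ∈ Icc a (a + h), HasDerivWithinAt (fun s ↦ v (s + h) - v s)
      (v' (s + h) - v' s) (Icc a (a + h)) s := by
    intro s hs
    have hshift : MapsTo (· + h) (Icc a (a + h)) (Icc a (a + 2 * h)) :=
      fun x hx ↦ ⟨by linarith [hx.1], by linarith [hx.2]⟩
    have hsub : Icc a (a + h) ⊆ Icc a (a + 2 * h) := Icc_subset_Icc le_rfl (by linarith)
    have h1 := (hv (s + h) (hshift hs)).scomp s ((hasDerivWithinAt_id s _).add_const h) hshift
    rw [one_smul] at h1
    exact h1.sub ((hv s (hsub hs)).mono hsub)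
  have hbound : ∀ s ∈ Ico a (a + h), ‖v' (s + h) - v' s‖ ≤ ∫ x in a..a + 2 * h, ‖v'' x‖ := by
    intro s hs
    have hsub : Icc s (s + h) ⊆ Icc a (a + 2 * h) :=
      Icc_subset_Icc hs.1 (by linarith [hs.2])
    calc ‖v' (s + h) - v' s‖ ≤ ∫ x in s..s + h, ‖v'' x‖ :=
          norm_sub_le_intervalIntegral_norm_deriv (by linarith)
            (fun x hx ↦ (hv' x (hsub hx)).mono hsub) (hv''.mono hsub)
      _ ≤ ∫ x in a..a + 2 * h, ‖v'' x‖ :=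
          integral_mono_interval hs.1 (by linarith) (by linarith [hs.2])
            (Filter.Eventually.of_forall fun _ ↦ norm_nonneg _)
            (hv''.norm.intervalIntegrable_of_Icc (by linarith))
  have key := norm_image_sub_le_of_norm_deriv_le_segment' hg hbound (a + h) ⟨by linarith, le_rfl⟩
  rw [show a + h + h = a + 2 * h by ring, add_sub_cancel_left] at key
  calc ‖v (a + 2 * h) - (2 : ℝ) • v (a + h) + v a‖
      = ‖v (a + 2 * h) - v (a + h) - (v (a + h) - v a)‖ := by congr 1; module
    _ ≤ _ := key
    _ = _ := mul_comm _ _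

theorem norm_sub_two_smul_add_sq_le {a h : ℝ} (hh : 0 ≤ h)
    (hv : ∀ s ∈ Icc a (a + 2 * h), HasDerivWithinAt v (v' s) (Icc a (a + 2 * h)) s)
    (hv' : ∀ s ∈ Icc a (a + 2 * h), HasDerivWithinAt v' (v'' s) (Icc a (a + 2 * h)) s)
    (hv'' : ContinuousOn v'' (Icc a (a + 2 * h))) :
    ‖v (a + 2 * h) - (2 : ℝ) • v (a + h) + v a‖ ^ 2 ≤
      2 * h ^ 3 * ∫ s in a..a + 2 * h, ‖v'' s‖ ^ 2 := by
  have hab : a ≤ a + 2 * h := by linarith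
  have hcs := sq_intervalIntegral_le_mul_intervalIntegral_sq hab
    (hv''.norm.intervalIntegrable_of_Icc hab) ((hv''.norm.pow 2).intervalIntegrable_of_Icc hab)
  calc ‖v (a + 2 * h) - (2 : ℝ) • v (a + h) + v a‖ ^ 2
      ≤ (h * ∫ s in a..a + 2 * h, ‖v'' s‖) ^ 2 := by
        gcongr; exact norm_sub_two_smul_add_le hh hv hv' hv''
    _ = h ^ 2 * (∫ s in a..a + 2 * h, ‖v'' s‖) ^ 2 := by ring
    _ ≤ h ^ 2 * ((a + 2 * h - a) * ∫ s in a..a + 2 * h, ‖v'' s‖ ^ 2) := by gcongr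
    _ = 2 * h ^ 3 * ∫ s in a..a + 2 * h, ‖v'' s‖ ^ 2 := by ring

theorem norm_second_difference_quotient_sq_le {T Δt : ℝ} (hΔt : 0 < Δt) {n : ℕ} (hn : 2 ≤ n)
    (hnT : n * Δt ≤ T)
    (hv : ∀ s ∈ Icc 0 T, HasDerivWithinAt v (v' s) (Icc 0 T) s)
    (hv' : ∀ s ∈ Icc 0 T, HasDerivWithinAt v' (v'' s) (Icc 0 T) s)
    (hv'' : ContinuousOn v'' (Icc 0 T)) :
    ‖(1 / Δt ^ 2) • (v (n * Δt) - (2 : ℝ) • v ((n - 1) * Δt) + v ((n - 2) * Δt))‖ ^ 2 ≤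
      2 / Δt * ∫ s in (n - 2) * Δt..n * Δt, ‖v'' s‖ ^ 2 := by
  set a : ℝ := (n - 2) * Δt
  have hn' : (2 : ℝ) ≤ n := by exact_mod_cast hn
  have hsub : Icc a (a + 2 * Δt) ⊆ Icc 0 T :=
    Icc_subset_Icc (by positivity) (by linarith)
  have hwindow := norm_sub_two_smul_add_sq_le hΔt.le (fun s hs ↦ (hv s (hsub hs)).mono hsub)
    (fun s hs ↦ (hv' s (hsub hs)).mono hsub) (hv''.mono hsub)
  rw [show a + 2 * Δt = n * Δt by ring, show a + Δt = (n - 1) * Δt by ring] at hwindow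
  rw [norm_smul, mul_pow, Real.norm_of_nonneg (by positivity)]
  calc (1 / Δt ^ 2) ^ 2 * ‖v (n * Δt) - (2 : ℝ) • v ((n - 1) * Δt) + v a‖ ^ 2
      ≤ (1 / Δt ^ 2) ^ 2 * (2 * Δt ^ 3 * ∫ s in a..n * Δt, ‖v'' s‖ ^ 2) := by gcongr
    _ = 2 / Δt * ∫ s in a..n * Δt, ‖v'' s‖ ^ 2 := by field_simp

end

theorem sum_intervalIntegral_two_steps_le {f : ℝ → ℝ} (hf : 0 ≤ f) {t : ℕ → ℝ}
    (ht : Monotone t) {n : ℕ} (hfi : IntervalIntegrable f volume (t 0) (t (n + 1))) :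
    ∑ k ∈ range n, ∫ x in t k..t (k + 2), f x ≤ 2 * ∫ x in t 0..t (n + 1), f x := by
  have hint : ∀ {i j}, i ≤ j → j ≤ n + 1 → IntervalIntegrable f volume (t i) (t j) :=
    fun hij hj ↦ hfi.mono_set (uIcc_subset_uIcc
      (mem_uIcc_of_le (ht (Nat.zero_le _)) (ht (hij.trans hj)))
      (mem_uIcc_of_le (ht (Nat.zero_le _)) (ht hj)))
  have hf' : 0 ≤ᵐ[volume.restrict (Ioc (t 0) (t (n + 1)))] f := Filter.Eventually.of_forall hf
  calc ∑ k ∈ range n, ∫ x in t k..t (k + 2), f x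
      = ∑ k ∈ range n, ((∫ x in t k..t (k + 1), f x) + ∫ x in t (k + 1)..t (k + 1 + 1), f x) :=
        sum_congr rfl fun k hk ↦ (integral_add_adjacent_intervals
          (hint k.le_succ (by have := mem_range.1 hk; omega))
          (hint (k + 1).le_succ (by have := mem_range.1 hk; omega))).symm
    _ = (∫ x in t 0..t n, f x) + ∫ x in t (0 + 1)..t (n + 1), f x := by
        rw [sum_add_distrib, sum_integral_adjacent_intervals fun k hk ↦ hint k.le_succ (by omega),
          sum_integral_adjacent_intervals (a := fun k ↦ t (k + 1))
            fun k hk ↦ hint (k + 1).le_succ (by omega)]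
    _ ≤ 2 * ∫ x in t 0..t (n + 1), f x := by
        have h1 := integral_mono_interval le_rfl (ht (Nat.zero_le n)) (ht n.le_succ) hf' hfi
        have h2 := integral_mono_interval (ht (Nat.zero_le (0 + 1))) (ht (by omega)) le_rfl hf' hfi
        linarith

theorem sum_Icc_intervalIntegral_grid_le {f : ℝ → ℝ} (hf : 0 ≤ f) {Δt : ℝ} (hΔt : 0 ≤ Δt)
    {N : ℕ} (hN : 1 ≤ N) (hfi : IntervalIntegrable f volume 0 (N * Δt)) :
    ∑ n ∈ Icc 2 N, ∫ x in (n - 2) * Δt..n * Δt, f x ≤ 2 * ∫ x in 0..N * Δt, f x := by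
  have ht : Monotone fun k : ℕ ↦ k * Δt := fun i j hij ↦ by dsimp only; gcongr
  have hN' : N - 1 + 1 = N := by omega
  have key := sum_intervalIntegral_two_steps_le hf ht (n := N - 1) (by simpa [hN'] using hfi)
  rw [hN', Nat.cast_zero, zero_mul] at key
  rw [← Finset.Ico_add_one_right_eq_Icc, sum_Ico_eq_sum_range, show N + 1 - 2 = N - 1 by omega]
  convert key using 4 with k <;> push_cast <;> ring

/-- Summed form of estimate (3.6b): on the uniform partition tₙ = nΔt of [0,T],
    Δt⁵ Σ_{n=2}^N ‖(v(tₙ) - 2v(t_{n-1}) + v(t_{n-2}))/Δt²‖² ≤ C Δt⁴ ∫_0^T ‖v''‖². -/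
theorem bdf2_second_difference_sum_bound
    {E : Type*} [NormedAddCommGroup E] [NormedSpace ℝ E] [CompleteSpace E] :
    ∃ C : ℝ, 0 < C ∧
      ∀ (T : ℝ), 0 < T →
        ∀ (N : ℕ), 2 ≤ N →
          ∀ (v v' v'' : ℝ → E),
            (∀ s ∈ Set.Icc (0 : ℝ) T,
                HasDerivWithinAt v (v' s) (Set.Icc (0 : ℝ) T) s) →
            (∀ s ∈ Set.Icc (0 : ℝ) T,
                HasDerivWithinAt v' (v'' s) (Set.Icc (0 : ℝ) T) s) →
            ContinuousOn v'' (Set.Icc (0 : ℝ) T) →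
            (T / N) ^ 5 * ∑ n ∈ Finset.Icc 2 N,
                ‖(1 / (T / N) ^ 2) •
                    (v ((n : ℝ) * (T / N))
                      - (2 : ℝ) • v (((n : ℝ) - 1) * (T / N))
                      + v (((n : ℝ) - 2) * (T / N)))‖ ^ 2
              ≤ C * (T / N) ^ 4 * ∫ s in (0 : ℝ)..T, ‖v'' s‖ ^ 2 := by
  refine ⟨4, by norm_num, fun T hT N hN v v' v'' hv hv' hv'' ↦ ?_⟩
  set Δt := T / N
  have hΔt : 0 < Δt := by positivity
  have hNT : (N : ℝ) * Δt = T := mul_div_cancel₀ T (by positivity)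
  calc _ ≤ Δt ^ 5 * ∑ n ∈ Icc 2 N, 2 / Δt * ∫ s in (n - 2) * Δt..n * Δt, ‖v'' s‖ ^ 2 := by
        gcongr with n hn
        have hnN : (n : ℝ) ≤ N := by exact_mod_cast (mem_Icc.1 hn).2
        exact norm_second_difference_quotient_sq_le hΔt (mem_Icc.1 hn).1 (by nlinarith) hv hv' hv''
    _ = 2 * Δt ^ 4 * ∑ n ∈ Icc 2 N, ∫ s in (n - 2) * Δt..n * Δt, ‖v'' s‖ ^ 2 := by
        rw [← mul_sum]; field_simp
    _ ≤ 2 * Δt ^ 4 * (2 * ∫ s in 0..N * Δt, ‖v'' s‖ ^ 2) := by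
        gcongr
        refine sum_Icc_intervalIntegral_grid_le (fun _ ↦ by positivity) hΔt.le (by omega) ?_
        rw [hNT]
        exact (hv''.norm.pow 2).intervalIntegrable_of_Icc hT.le
    _ = 4 * Δt ^ 4 * ∫ s in 0..T, ‖v'' s‖ ^ 2 := by rw [hNT]; ring
end

section
/- Let E be a real Banach space. There exists a constant C > 0 such that for every T > 0, every natural number N ≥ 2, with Δt := T/N and tₙ := n·Δt, and every function v : ℝ → E that is three times continuously differentiable on [0, T] with first derivative v′ and third derivative v‴, one has Δt·Σ_{n=2}^{N} ‖v′(tₙ) − (3·v(tₙ) − 4·v(t_{n−1}) + v(t_{n−2}))/(2Δt)‖² ≤ C·Δt⁴·∫_{0}^{T} ‖v‴(s)‖² ds. -/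
/-!
The BDF2 defect at `tₙ` is expanded by Taylor's formula about `tₙ` with integral remainder: the
terms of order `≤ 2` cancel and what is left is `(R₂ - 4 R₁) / (2Δt)`, where
`R_k = ∫_{t_{n-k}}^{t_n} (t_{n-k} - s)² / 2 • v‴(s) ds`. Bounding the kernels by their maxima gives
`‖defect‖ ≤ 2Δt ∫_{t_{n-2}}^{t_n} ‖v‴‖`, and Cauchy–Schwarz turns this into
`‖defect‖² ≤ 8Δt³ ∫_{t_{n-2}}^{t_n} ‖v‴‖²`. Every cell `[t_k, t_{k+1}]` lies in at most two of the
windows `[t_{n-2}, t_n]`, so summing gives the bound with `C = 16`.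
-/

open intervalIntegral

open Set MeasureTheory

theorem sq_integral_le_mul_integral_sq {φ : ℝ → ℝ} {a b : ℝ} (hab : a ≤ b)
    (hφ : IntervalIntegrable φ volume a b)
    (hφ2 : IntervalIntegrable (fun s => φ s ^ 2) volume a b) :
    (∫ s in a..b, φ s) ^ 2 ≤ (b - a) * ∫ s in a..b, φ s ^ 2 := by
  rcases hab.eq_or_lt with rfl | hlt
  · simp
  have hL : 0 < b - a := sub_pos.2 hlt
  set J := ∫ s in a..b, φ s
  set c := J / (b - a)
  -- integrate `2 c φ ≤ φ² + c²`, with `c` the mean value of `φ`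
  have hamgm : ∫ s in a..b, 2 * c * φ s ≤ ∫ s in a..b, (φ s ^ 2 + c ^ 2) :=
    integral_mono_on hab (hφ.const_mul _) (hφ2.add intervalIntegrable_const)
      fun s _ => by nlinarith [sq_nonneg (φ s - c)]
  rw [intervalIntegral.integral_const_mul, integral_add hφ2 intervalIntegrable_const,
    intervalIntegral.integral_const, smul_eq_mul] at hamgm
  have hmean : J ^ 2 / (b - a) ≤ ∫ s in a..b, φ s ^ 2 := by
    have h1 : 2 * c * J = 2 * (J ^ 2 / (b - a)) := by simp only [c]; ring
    have h2 : (b - a) * c ^ 2 = J ^ 2 / (b - a) := by simp only [c]; field_simp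
    linarith
  rw [div_le_iff₀ hL] at hmean
  linarith

theorem sum_integral_two_cells_le {a : ℕ → ℝ} (ha : Monotone a) {g : ℝ → ℝ}
    (hg : ∀ x, 0 ≤ g x) {m : ℕ} (hint : IntervalIntegrable g volume (a 0) (a (m + 1))) :
    ∑ k ∈ Finset.range m, ∫ x in a k..a (k + 2), g x ≤ 2 * ∫ x in a 0..a (m + 1), g x := by
  have hcell : ∀ k ≤ m, IntervalIntegrable g volume (a k) (a (k + 1)) := fun k hk =>
    hint.mono_set (uIcc_subset_uIcc (mem_uIcc_of_le (ha k.zero_le) (ha (by omega)))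
      (mem_uIcc_of_le (ha (by omega)) (ha (by omega))))
  -- `k + 1 + 1` rather than `k + 2`, so that the shifted sequence `a (· + 1)` matches below
  have hsplit : ∀ k ∈ Finset.range m, ∫ x in a k..a (k + 2), g x
      = (∫ x in a k..a (k + 1), g x) + ∫ x in a (k + 1)..a (k + 1 + 1), g x := fun k hk =>
    (integral_add_adjacent_intervals (hcell k (by simp at hk; omega))
      (hcell (k + 1) (by simp at hk; omega))).symm
  rw [Finset.sum_congr rfl hsplit, Finset.sum_add_distrib, sum_integral_adjacent_intervals
    (fun k hk => hcell k hk.le), sum_integral_adjacent_intervals (a := fun k => a (k + 1))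
    (fun k hk => hcell (k + 1) hk)]
  have hg' : 0 ≤ᵐ[volume.restrict (Ioc (a 0) (a (m + 1)))] g := ae_of_all _ hg
  have h1 := integral_mono_interval le_rfl (ha (Nat.zero_le m)) (ha m.le_succ) hg' hint
  have h2 := integral_mono_interval (ha (Nat.zero_le 1)) (ha (by omega)) le_rfl hg' hint
  linarith

theorem sum_integral_uniform_windows_le {g : ℝ → ℝ} (hg : ∀ x, 0 ≤ g x) {h : ℝ} (hh : 0 ≤ h)
    {N : ℕ} (hint : IntervalIntegrable g volume 0 (N * h)) :
    ∑ n ∈ Finset.Icc 2 N, ∫ x in ((n : ℝ) * h - 2 * h)..((n : ℝ) * h), g x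
      ≤ 2 * ∫ x in (0 : ℝ)..(N : ℝ) * h, g x := by
  rcases N with _ | N
  · simp
  have hmono : Monotone fun k : ℕ => (k : ℝ) * h := fun i j hij => by dsimp only; gcongr
  have hcells := sum_integral_two_cells_le hmono hg (m := N) (by simpa using hint)
  rw [← Finset.Ico_add_one_right_eq_Icc, Finset.sum_Ico_eq_sum_range,
    show N + 1 + 1 - 2 = N by omega]
  simp only [Nat.cast_zero, zero_mul] at hcells
  convert hcells using 3 with k <;> push_cast <;> ring

section

variable {E : Type*} [NormedAddCommGroup E] [NormedSpace ℝ E]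

theorem taylor_two_integral_remainder [CompleteSpace E] {f f' f'' f''' : ℝ → E} {S : Set ℝ}
    {a b : ℝ} (hab : a ≤ b) (hS : Icc a b ⊆ S)
    (hf : ∀ x ∈ S, HasDerivWithinAt f (f' x) S x)
    (hf' : ∀ x ∈ S, HasDerivWithinAt f' (f'' x) S x)
    (hf'' : ∀ x ∈ S, HasDerivWithinAt f'' (f''' x) S x)
    (hf''' : ContinuousOn f''' S) :
    f a = f b + (a - b) • f' b + ((a - b) ^ 2 / 2) • f'' b
      - ∫ s in a..b, ((a - s) ^ 2 / 2) • f''' s := by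
  set G : ℝ → E := fun s => f s + (a - s) • f' s + ((a - s) ^ 2 / 2) • f'' s
  have hG : ∀ x ∈ S, HasDerivWithinAt G (((a - x) ^ 2 / 2) • f''' x) S x := by
    intro x hx
    have hp1 : HasDerivWithinAt (fun y : ℝ => a - y) (-1) S x := by
      simpa using (hasDerivWithinAt_id x S).const_sub a
    have hp2 : HasDerivWithinAt (fun y : ℝ => (a - y) ^ 2 / 2) (-(a - x)) S x :=
      ((hp1.pow 2).div_const 2).congr_deriv (by ring)
    exact (((hf x hx).add (hp1.smul (hf' x hx))).add (hp2.smul (hf'' x hx))).congr_deriv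
      (by module)
  have hFTC := integral_eq_sub_of_hasDeriv_right_of_le hab
    (fun x hx => (hG x (hS hx)).continuousWithinAt.mono hS)
    (fun x hx => ((hG x (hS (Ioo_subset_Icc_self hx))).hasDerivAt
      (Filter.mem_of_superset (Icc_mem_nhds hx.1 hx.2) hS)).hasDerivWithinAt)
    ((by fun_prop : Continuous fun s : ℝ => (a - s) ^ 2 / 2).continuousOn.smul
      (hf'''.mono hS) |>.intervalIntegrable_of_Icc hab)
  simp only [G, sub_self, zero_smul, add_zero, ne_eq, OfNat.ofNat_ne_zero, not_false_eq_true,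
    zero_pow, zero_div] at hFTC
  rw [hFTC]
  abel

theorem norm_integral_sq_smul_le {f : ℝ → E} {a b : ℝ} (hab : a ≤ b)
    (hf : ContinuousOn f (Icc a b)) :
    ‖∫ s in a..b, ((a - s) ^ 2 / 2) • f s‖ ≤ (b - a) ^ 2 / 2 * ∫ s in a..b, ‖f s‖ := by
  rw [← intervalIntegral.integral_const_mul]
  refine norm_integral_le_of_norm_le hab (ae_of_all _ fun s hs => ?_)
    ((hf.norm.intervalIntegrable_of_Icc hab).const_mul _)
  rw [norm_smul, Real.norm_of_nonneg (by positivity)]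
  have : (a - s) ^ 2 ≤ (b - a) ^ 2 := by nlinarith [hs.1, hs.2]
  gcongr ?_ * _
  linarith

noncomputable def bdf2Defect (v v' : ℝ → E) (t h : ℝ) : E :=
  v' t - (1 / (2 * h)) • ((3 : ℝ) • v t - (4 : ℝ) • v (t - h) + v (t - 2 * h))

variable [CompleteSpace E] {v v' v'' v''' : ℝ → E} {S : Set ℝ} {t h : ℝ}

theorem norm_bdf2Defect_le (hh : 0 < h) (hS : Icc (t - 2 * h) t ⊆ S)
    (hv : ∀ x ∈ S, HasDerivWithinAt v (v' x) S x)
    (hv' : ∀ x ∈ S, HasDerivWithinAt v' (v'' x) S x)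
    (hv'' : ∀ x ∈ S, HasDerivWithinAt v'' (v''' x) S x)
    (hv''' : ContinuousOn v''' S) :
    ‖bdf2Defect v v' t h‖ ≤ 2 * h * ∫ s in (t - 2 * h)..t, ‖v''' s‖ := by
  have hS₁ : Icc (t - h) t ⊆ S := (Set.Icc_subset_Icc_left (by linarith)).trans hS
  set R₁ := ∫ s in (t - h)..t, ((t - h - s) ^ 2 / 2) • v''' s
  set R₂ := ∫ s in (t - 2 * h)..t, ((t - 2 * h - s) ^ 2 / 2) • v''' s
  have hdefect : bdf2Defect v v' t h = (1 / (2 * h)) • (R₂ - (4 : ℝ) • R₁) := by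
    rw [bdf2Defect, taylor_two_integral_remainder (by linarith) hS₁ hv hv' hv'' hv''',
      taylor_two_integral_remainder (by linarith) hS hv hv' hv'' hv''']
    match_scalars <;> field_simp <;> ring
  set J := ∫ s in (t - 2 * h)..t, ‖v''' s‖
  have hJ₁ : ∫ s in (t - h)..t, ‖v''' s‖ ≤ J :=
    integral_mono_interval (by linarith) (by linarith) le_rfl (ae_of_all _ fun _ => norm_nonneg _)
      ((hv'''.mono hS).norm.intervalIntegrable_of_Icc (by linarith))
  have hR₁ : ‖R₁‖ ≤ h ^ 2 / 2 * J :=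
    (norm_integral_sq_smul_le (by linarith) (hv'''.mono hS₁)).trans
      (by rw [sub_sub_cancel]; gcongr)
  have hR₂ : ‖R₂‖ ≤ 2 * h ^ 2 * J :=
    (norm_integral_sq_smul_le (by linarith) (hv'''.mono hS)).trans_eq
      (by rw [sub_sub_cancel]; ring)
  calc ‖bdf2Defect v v' t h‖ = 1 / (2 * h) * ‖R₂ - (4 : ℝ) • R₁‖ := by
        rw [hdefect, norm_smul, Real.norm_of_nonneg (by positivity)]
    _ ≤ 1 / (2 * h) * (‖R₂‖ + 4 * ‖R₁‖) := by
        gcongr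
        refine (norm_sub_le _ _).trans_eq ?_
        rw [norm_smul, Real.norm_of_nonneg (by norm_num)]
    _ ≤ 1 / (2 * h) * (2 * h ^ 2 * J + 4 * (h ^ 2 / 2 * J)) := by gcongr
    _ = 2 * h * J := by field_simp; ring

theorem sq_norm_bdf2Defect_le (hh : 0 < h) (hS : Icc (t - 2 * h) t ⊆ S)
    (hv : ∀ x ∈ S, HasDerivWithinAt v (v' x) S x)
    (hv' : ∀ x ∈ S, HasDerivWithinAt v' (v'' x) S x)
    (hv'' : ∀ x ∈ S, HasDerivWithinAt v'' (v''' x) S x)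
    (hv''' : ContinuousOn v''' S) :
    ‖bdf2Defect v v' t h‖ ^ 2 ≤ 8 * h ^ 3 * ∫ s in (t - 2 * h)..t, ‖v''' s‖ ^ 2 := by
  have hcont : ContinuousOn (fun s => ‖v''' s‖) (Icc (t - 2 * h) t) := (hv'''.mono hS).norm
  have hCS := sq_integral_le_mul_integral_sq (by linarith)
    (hcont.intervalIntegrable_of_Icc (by linarith))
    ((hcont.pow 2).intervalIntegrable_of_Icc (by linarith))
  rw [sub_sub_cancel] at hCS
  calc ‖bdf2Defect v v' t h‖ ^ 2 ≤ (2 * h * ∫ s in (t - 2 * h)..t, ‖v''' s‖) ^ 2 := by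
        gcongr
        exact norm_bdf2Defect_le hh hS hv hv' hv'' hv'''
    _ = 4 * h ^ 2 * (∫ s in (t - 2 * h)..t, ‖v''' s‖) ^ 2 := by ring
    _ ≤ 4 * h ^ 2 * (2 * h * ∫ s in (t - 2 * h)..t, ‖v''' s‖ ^ 2) := by gcongr
    _ = 8 * h ^ 3 * ∫ s in (t - 2 * h)..t, ‖v''' s‖ ^ 2 := by ring

end

/-- Summed BDF2 truncation error bound, from estimate (3.6c): on the uniform
    partition tₙ = nΔt of [0,T],
    Δt Σ_{n=2}^N ‖v'(tₙ) - (3v(tₙ) - 4v(t_{n-1}) + v(t_{n-2}))/(2Δt)‖²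
      ≤ C Δt⁴ ∫_0^T ‖v'''‖². -/
theorem bdf2_truncation_error_sum_bound
    {E : Type*} [NormedAddCommGroup E] [NormedSpace ℝ E] [CompleteSpace E] :
    ∃ C : ℝ, 0 < C ∧
      ∀ (T : ℝ), 0 < T →
        ∀ (N : ℕ), 2 ≤ N →
          ∀ (v v' v'' v''' : ℝ → E),
            (∀ s ∈ Set.Icc (0 : ℝ) T,
                HasDerivWithinAt v (v' s) (Set.Icc (0 : ℝ) T) s) →
            (∀ s ∈ Set.Icc (0 : ℝ) T,
                HasDerivWithinAt v' (v'' s) (Set.Icc (0 : ℝ) T) s) →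
            (∀ s ∈ Set.Icc (0 : ℝ) T,
                HasDerivWithinAt v'' (v''' s) (Set.Icc (0 : ℝ) T) s) →
            ContinuousOn v''' (Set.Icc (0 : ℝ) T) →
            (T / N) * ∑ n ∈ Finset.Icc 2 N,
                ‖v' ((n : ℝ) * (T / N))
                    - (1 / (2 * (T / N))) •
                        ((3 : ℝ) • v ((n : ℝ) * (T / N))
                          - (4 : ℝ) • v (((n : ℝ) - 1) * (T / N))
                          + v (((n : ℝ) - 2) * (T / N)))‖ ^ 2
              ≤ C * (T / N) ^ 4 * ∫ s in (0 : ℝ)..T, ‖v''' s‖ ^ 2 := by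
  refine ⟨16, by norm_num, fun T hT N hN v v' v'' v''' hv hv' hv'' hv''' => ?_⟩
  set h := T / N
  have hh : 0 < h := div_pos hT (by positivity)
  have hNh : (N : ℝ) * h = T := by simp only [h]; field_simp
  have hcell : ∀ n ∈ Finset.Icc 2 N, ‖bdf2Defect v v' ((n : ℝ) * h) h‖ ^ 2
      ≤ 8 * h ^ 3 * ∫ s in ((n : ℝ) * h - 2 * h)..((n : ℝ) * h), ‖v''' s‖ ^ 2 := by
    intro n hn
    obtain ⟨h2, hnN⟩ := Finset.mem_Icc.1 hn
    have h2' : (2 : ℝ) ≤ n := by exact_mod_cast h2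
    refine sq_norm_bdf2Defect_le hh (Set.Icc_subset_Icc (by nlinarith) ?_) hv hv' hv'' hv'''
    rw [← hNh]
    gcongr
  have hwindows := sum_integral_uniform_windows_le (fun x => sq_nonneg ‖v''' x‖) hh.le
    (hNh ▸ (hv'''.norm.pow 2).intervalIntegrable_of_Icc hT.le)
  rw [hNh] at hwindows
  -- after this the summand is `bdf2Defect v v' (n * h) h` up to unfolding
  simp only [sub_mul, one_mul]
  calc h * ∑ n ∈ Finset.Icc 2 N, ‖bdf2Defect v v' ((n : ℝ) * h) h‖ ^ 2
      ≤ h * ∑ n ∈ Finset.Icc 2 N,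
          8 * h ^ 3 * ∫ s in ((n : ℝ) * h - 2 * h)..((n : ℝ) * h), ‖v''' s‖ ^ 2 := by
        gcongr with n hn; exact hcell n hn
    _ = 8 * h ^ 4 * ∑ n ∈ Finset.Icc 2 N,
          ∫ s in ((n : ℝ) * h - 2 * h)..((n : ℝ) * h), ‖v''' s‖ ^ 2 := by
        rw [← Finset.mul_sum]; ring
    _ ≤ 8 * h ^ 4 * (2 * ∫ s in (0 : ℝ)..T, ‖v''' s‖ ^ 2) := by gcongr
    _ = 16 * h ^ 4 * ∫ s in (0 : ℝ)..T, ‖v''' s‖ ^ 2 := by ring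
end
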